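/- arXiv:2512.24892 — 2 statements merged into one kernel-verified Lean document; each statement's English description precedes it below -/
import Mathlib

section
/- Let T ∈ (0, ∞], let t₀ ∈ ℝ with t₀ < T, let τ ∈ (0, T − t₀), and let a > 0 and b > 0. Suppose y : [t₀, T) → [0, ∞) is absolutely continuous on every compact subinterval of [t₀, T) and satisfies y'(t) + a·y(t) ≤ h(t) for almost every t ∈ (t₀, T), where h : [t₀, T) → [0, ∞) is locally Lebesgue integrable and satisfies (1/τ)·∫_t^{t+τ} h(s) ds ≤ b for all t ∈ [t₀, T − τ). Then y(t) ≤ y(t₀)·e^{−a(t−t₀)} + b·τ/(1 − e^{−a·τ}) for all t ∈ [t₀, T). -/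
/-!
Multiplying by the integrating factor `exp (a s)` and integrating (product rule for
absolutely continuous functions) gives
`exp (a t) y t - exp (a t₀) y t₀ ≤ ∫_{t₀}^t exp (a s) h s`.
Cutting `[t₀, t]` into windows of length `τ` from the right, the window ending at `t - k τ`
contributes at most `exp (a (t - k τ)) b τ`, and the geometric series sums to
`exp (a t) b τ / (1 - exp (-a τ))`.
-/

open MeasureTheory Real Set

theorem AbsolutelyContinuousOnInterval.integral_exp_mul_deriv_add {f : ℝ → ℝ} {p q : ℝ}
    (hf : AbsolutelyContinuousOnInterval f p q) (a : ℝ) :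
    ∫ x in p..q, exp (a * x) * (deriv f x + a * f x) = exp (a * q) * f q - exp (a * p) * f p := by
  have hexp : AbsolutelyContinuousOnInterval (fun x ↦ exp (a * x)) p q :=
    ContDiffOn.absolutelyContinuousOnInterval (by fun_prop)
  rw [← hexp.integral_deriv_mul_eq_sub hf]
  congr 1 with x
  have hderiv : deriv (fun x ↦ exp (a * x)) x = a * exp (a * x) := by
    simpa [mul_comm] using (((hasDerivAt_id x).const_mul a).exp).deriv
  rw [hderiv]
  ring

theorem AbsolutelyContinuousOnInterval.exp_mul_sub_le_integral_of_deriv_add_le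
    {f h : ℝ → ℝ} {a p q : ℝ} (hpq : p ≤ q) (hf : AbsolutelyContinuousOnInterval f p q)
    (h_int : IntervalIntegrable h volume p q)
    (hle : ∀ᵐ s, s ∈ Ioc p q → deriv f s + a * f s ≤ h s) :
    exp (a * q) * f q - exp (a * p) * f p ≤ ∫ s in p..q, exp (a * s) * h s := by
  have hlhs_int : IntervalIntegrable (fun s ↦ exp (a * s) * (deriv f s + a * f s)) volume p q :=
    (hf.intervalIntegrable_deriv.add (hf.continuousOn.const_smul a).intervalIntegrable)
      |>.continuousOn_mul (by fun_prop)
  rw [← hf.integral_exp_mul_deriv_add a, intervalIntegral.integral_of_le hpq,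
    intervalIntegral.integral_of_le hpq]
  refine setIntegral_mono_ae_restrict hlhs_int.1 (h_int.continuousOn_mul (by fun_prop)).1 ?_
  filter_upwards [ae_restrict_of_ae hle, ae_restrict_mem measurableSet_Ioc] with s hs hmem
  exact mul_le_mul_of_nonneg_left (hs hmem) (exp_pos _).le

theorem intervalIntegral.integral_exp_mul_le_of_integral_le {h : ℝ → ℝ} {a u v B : ℝ}
    (ha : 0 ≤ a) (huv : u ≤ v) (h_nonneg : ∀ s ∈ Icc u v, 0 ≤ h s)
    (h_int : IntervalIntegrable h volume u v) (hB : ∫ s in u..v, h s ≤ B) :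
    ∫ s in u..v, exp (a * s) * h s ≤ exp (a * v) * B := calc
  _ ≤ ∫ s in u..v, exp (a * v) * h s :=
    intervalIntegral.integral_mono_on huv (h_int.continuousOn_mul (by fun_prop))
      (h_int.const_mul _) fun s hs ↦ by gcongr; exacts [h_nonneg s hs, hs.2]
  _ ≤ exp (a * v) * B := by rw [intervalIntegral.integral_const_mul]; gcongr

theorem mul_div_one_sub_add_self {K : Type*} [Field K] {r B : K} (hr : r ≠ 1) :
    r * (B / (1 - r)) + B = B / (1 - r) := by
  rw [eq_div_iff (sub_ne_zero.2 hr.symm), add_mul, mul_assoc,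
    div_mul_cancel₀ _ (sub_ne_zero.2 hr.symm)]
  ring

theorem integral_exp_mul_le_of_window_integral_le_of_sub_le {h : ℝ → ℝ} {a τ B t₀ : ℝ}
    (ha : 0 < a) (hτ : 0 < τ) (n : ℕ) {t : ℝ} (ht : t₀ ≤ t) (htn : t - t₀ ≤ n * τ)
    (h_nonneg : ∀ s ∈ Icc t₀ t, 0 ≤ h s) (h_int : IntervalIntegrable h volume t₀ t)
    (h_window : ∀ u v, t₀ ≤ u → u ≤ v → v ≤ u + τ → v ≤ t →
      ∫ s in u..v, h s ≤ B) :
    ∫ s in t₀..t, exp (a * s) * h s ≤ exp (a * t) * (B / (1 - exp (-a * τ))) := by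
  have hr : exp (-a * τ) < 1 := exp_lt_one_iff.2 (by nlinarith)
  have hB : 0 ≤ B := by simpa using h_window t₀ t₀ le_rfl le_rfl (by linarith) ht
  have hBC : B ≤ B / (1 - exp (-a * τ)) :=
    le_div_self hB (by linarith) (by linarith [exp_pos (-a * τ)])
  induction n generalizing t with
  | zero =>
    obtain rfl : t = t₀ := by simp only [CharP.cast_eq_zero, zero_mul] at htn; linarith
    simpa using mul_nonneg (exp_pos _).le (hB.trans hBC)
  | succ n ih =>
    by_cases hshort : t ≤ t₀ + τ
    · exact (intervalIntegral.integral_exp_mul_le_of_integral_le ha.le ht h_nonneg h_int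
        (h_window t₀ t le_rfl ht hshort le_rfl)).trans (by gcongr)
    -- Split off the last window `[t - τ, t]`; the integral before it is the same problem at
    -- `t - τ`, and `B / (1 - exp (-a τ))` is the fixed point of `C ↦ exp (-a τ) C + B`.
    have hmid : t₀ ≤ t - τ := by linarith
    have h_int_mid : IntervalIntegrable h volume t₀ (t - τ) :=
      h_int.mono_set (uIcc_subset_uIcc left_mem_uIcc (Icc_subset_uIcc ⟨hmid, by linarith⟩))
    rw [← intervalIntegral.integral_add_adjacent_intervals
      (h_int_mid.continuousOn_mul (by fun_prop))
      ((h_int_mid.symm.trans h_int).continuousOn_mul (by fun_prop))]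
    calc _ ≤ exp (a * (t - τ)) * (B / (1 - exp (-a * τ))) + exp (a * t) * B :=
          add_le_add (ih hmid (by push_cast at htn; linarith)
            (fun s hs ↦ h_nonneg s ⟨hs.1, by linarith [hs.2]⟩) h_int_mid
            (fun u v hu huv hvu hvt ↦ h_window u v hu huv hvu (by linarith)))
            (intervalIntegral.integral_exp_mul_le_of_integral_le ha.le (by linarith)
              (fun s hs ↦ h_nonneg s ⟨by linarith [hs.1], hs.2⟩) (h_int_mid.symm.trans h_int)
              (h_window _ t hmid (by linarith) (by linarith) le_rfl))
      _ = exp (a * t) * (exp (-a * τ) * (B / (1 - exp (-a * τ))) + B) := by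
          rw [mul_sub, sub_eq_add_neg, exp_add]; ring_nf
      _ = exp (a * t) * (B / (1 - exp (-a * τ))) := by rw [mul_div_one_sub_add_self hr.ne]

theorem integral_exp_mul_le_of_window_integral_le {h : ℝ → ℝ} {a τ B t₀ t : ℝ}
    (ha : 0 < a) (hτ : 0 < τ) (ht : t₀ ≤ t) (h_nonneg : ∀ s ∈ Icc t₀ t, 0 ≤ h s)
    (h_int : IntervalIntegrable h volume t₀ t)
    (h_window : ∀ u v, t₀ ≤ u → u ≤ v → v ≤ u + τ → v ≤ t →
      ∫ s in u..v, h s ≤ B) :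
    ∫ s in t₀..t, exp (a * s) * h s ≤ exp (a * t) * (B / (1 - exp (-a * τ))) :=
  integral_exp_mul_le_of_window_integral_le_of_sub_le ha hτ ⌈(t - t₀) / τ⌉₊ ht
    ((div_le_iff₀ hτ).1 (Nat.le_ceil _)) h_nonneg h_int h_window

theorem integral_le_of_average_le {T : EReal} {t₀ τ b : ℝ} {h : ℝ → ℝ} (hτ : 0 < τ)
    (hτT : (τ : EReal) < T - (t₀ : EReal))
    (hh_nonneg : ∀ t : ℝ, t₀ ≤ t → (t : EReal) < T → 0 ≤ h t)
    (hh_int : ∀ t : ℝ, t₀ ≤ t → (t : EReal) < T → IntervalIntegrable h volume t₀ t)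
    (hh_avg : ∀ t : ℝ, t₀ ≤ t → ((t + τ : ℝ) : EReal) < T →
      (1 / τ) * ∫ s in t..(t + τ), h s ≤ b)
    {u v : ℝ} (hu : t₀ ≤ u) (huv : u ≤ v) (hvu : v ≤ u + τ) (hvT : (v : EReal) < T) :
    ∫ s in u..v, h s ≤ b * τ := by
  -- `[u, v]` lies in the full window `[w, w + τ]`, which still ends before `T`.
  set w := max t₀ (v - τ)
  have hw : t₀ ≤ w := le_max_left _ _
  have hwτT : ((w + τ : ℝ) : EReal) < T := by
    rcases max_cases t₀ (v - τ) with ⟨hw', -⟩ | ⟨hw', -⟩ <;> simp only [w, hw']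
    · rw [EReal.coe_add, add_comm]
      exact EReal.add_lt_of_lt_sub hτT
    · simpa using hvT
  have hlt : ∀ s : ℝ, s ≤ w + τ → (s : EReal) < T := fun s hs ↦
    lt_of_le_of_lt (EReal.coe_le_coe_iff.2 hs) hwτT
  calc ∫ s in u..v, h s ≤ ∫ s in w..(w + τ), h s := by
        refine intervalIntegral.integral_mono_interval (max_le hu (by linarith)) huv
          (by linarith [le_max_right t₀ (v - τ)]) ?_
          ((hh_int w hw (hlt w (by linarith))).symm.trans (hh_int _ (by linarith) hwτT))
        filter_upwards [ae_restrict_mem measurableSet_Ioc] with s hs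
        exact hh_nonneg s (by linarith [hs.1]) (hlt s hs.2)
    _ ≤ b * τ := by
        have := hh_avg w hw hwτT
        rwa [one_div, inv_mul_le_iff₀ hτ, mul_comm] at this

theorem le_mul_exp_neg_add_of_exp_mul_sub_le {a t₀ t y₀ y C : ℝ}
    (h : exp (a * t) * y - exp (a * t₀) * y₀ ≤ exp (a * t) * C) :
    y ≤ y₀ * exp (-a * (t - t₀)) + C := by
  have hexp : exp (-a * (t - t₀)) * exp (a * t) = exp (a * t₀) := by rw [← exp_add]; ring_nf
  refine le_of_mul_le_mul_left ?_ (exp_pos (a * t))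
  calc exp (a * t) * y ≤ exp (a * t₀) * y₀ + exp (a * t) * C := by linarith
    _ = _ := by rw [← hexp]; ring

theorem odi_comparison_general
    (T : EReal) (t₀ τ a b : ℝ)
    (hτ0 : 0 < τ) (hτT : (τ : EReal) < T - (t₀ : EReal))
    (ha : 0 < a)
    (y y' h : ℝ → ℝ)
    (hy'_int : ∀ t : ℝ, t₀ ≤ t → (t : EReal) < T → IntervalIntegrable y' volume t₀ t)
    (hy_ac : ∀ t : ℝ, t₀ ≤ t → (t : EReal) < T → y t = y t₀ + ∫ s in t₀..t, y' s)
    (hh_nonneg : ∀ t : ℝ, t₀ ≤ t → (t : EReal) < T → 0 ≤ h t)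
    (hh_int : ∀ t : ℝ, t₀ ≤ t → (t : EReal) < T → IntervalIntegrable h volume t₀ t)
    (hODI : ∀ᵐ t ∂(volume.restrict {t : ℝ | t₀ < t ∧ (t : EReal) < T}),
      y' t + a * y t ≤ h t)
    (hh_avg : ∀ t : ℝ, t₀ ≤ t → ((t + τ : ℝ) : EReal) < T →
      (1 / τ) * ∫ s in t..(t + τ), h s ≤ b) :
    ∀ t : ℝ, t₀ ≤ t → (t : EReal) < T →
      y t ≤ y t₀ * Real.exp (-a * (t - t₀)) + b * τ / (1 - Real.exp (-a * τ)) := by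
  intro t ht htT
  have hlt : ∀ s ≤ t, (s : EReal) < T := fun s hs ↦
    lt_of_le_of_lt (EReal.coe_le_coe_iff.2 hs) htT
  set f : ℝ → ℝ := fun s ↦ y t₀ + ∫ u in t₀..s, y' u
  have hf_ac : AbsolutelyContinuousOnInterval f t₀ t :=
    contDiffOn_const.absolutelyContinuousOnInterval.fun_add
      ((hy'_int t ht htT).absolutelyContinuousOnInterval_intervalIntegral (by simp))
  have hfy : ∀ s, t₀ ≤ s → s ≤ t → f s = y s := fun s hs hst ↦
    (hy_ac s hs (hlt s hst)).symm
  have hf_deriv : ∀ᵐ s, s ∈ Ioc t₀ t → deriv f s + a * f s ≤ h s := by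
    have hODI' : ∀ᵐ s ∂volume.restrict (Ioc t₀ t), y' s + a * y s ≤ h s :=
      ae_restrict_of_ae_restrict_of_subset (t := {s : ℝ | t₀ < s ∧ (s : EReal) < T})
        (fun s hs ↦ ⟨hs.1, hlt s hs.2⟩) hODI
    filter_upwards [(ae_restrict_iff' measurableSet_Ioc).1 hODI',
      (hy'_int t ht htT).ae_hasDerivAt_integral] with s hs hderiv hmem
    have hderiv' := hderiv (Icc_subset_uIcc (Ioc_subset_Icc_self hmem)) t₀ left_mem_uIcc
    rw [(hderiv'.const_add (y t₀)).deriv, hfy s hmem.1.le hmem.2]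
    exact hs hmem
  have hcompare := hf_ac.exp_mul_sub_le_integral_of_deriv_add_le ht (hh_int t ht htT) hf_deriv
  have hwindow := integral_exp_mul_le_of_window_integral_le (h := h) ha hτ0 ht
    (fun s hs ↦ hh_nonneg s hs.1 (hlt s hs.2)) (hh_int t ht htT)
    (fun u v hu huv hvu hvt ↦ integral_le_of_average_le hτ0 hτT hh_nonneg hh_int hh_avg
      hu huv hvu (hlt v hvt))
  rw [hfy t ht le_rfl, hfy t₀ le_rfl ht] at hcompare
  exact le_mul_exp_neg_add_of_exp_mul_sub_le (hcompare.trans hwindow)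

/-- **Lemma (ODI comparison).** Let `T ∈ (0, ∞]`, `t₀ ∈ ℝ` with `t₀ < T`,
`τ ∈ (0, T − t₀)`, `a > 0`, `b > 0`. Suppose `y : [t₀, T) → [0, ∞)` is absolutely
continuous on compact subintervals (encoded via the fundamental theorem of calculus:
`y t = y t₀ + ∫_{t₀}^t y'` with `y'` locally integrable) and satisfies
`y' t + a * y t ≤ h t` for a.e. `t ∈ (t₀, T)`, where `h ≥ 0` is locally integrable with
`(1/τ) ∫_t^{t+τ} h ≤ b` for all `t ∈ [t₀, T − τ)`. Then
`y t ≤ y t₀ * exp (−a (t − t₀)) + b τ / (1 − exp (−a τ))` for all `t ∈ [t₀, T)`. -/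
theorem odi_comparison
    (T : EReal) (t₀ τ a b : ℝ)
    (hT : 0 < T) (ht₀T : (t₀ : EReal) < T)
    (hτ0 : 0 < τ) (hτT : (τ : EReal) < T - (t₀ : EReal))
    (ha : 0 < a) (hb : 0 < b)
    (y y' h : ℝ → ℝ)
    (hy_nonneg : ∀ t : ℝ, t₀ ≤ t → (t : EReal) < T → 0 ≤ y t)
    (hy'_int : ∀ t : ℝ, t₀ ≤ t → (t : EReal) < T → IntervalIntegrable y' volume t₀ t)
    (hy_ac : ∀ t : ℝ, t₀ ≤ t → (t : EReal) < T → y t = y t₀ + ∫ s in t₀..t, y' s)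
    (hh_nonneg : ∀ t : ℝ, t₀ ≤ t → (t : EReal) < T → 0 ≤ h t)
    (hh_int : ∀ t : ℝ, t₀ ≤ t → (t : EReal) < T → IntervalIntegrable h volume t₀ t)
    (hODI : ∀ᵐ t ∂(volume.restrict {t : ℝ | t₀ < t ∧ (t : EReal) < T}),
      y' t + a * y t ≤ h t)
    (hh_avg : ∀ t : ℝ, t₀ ≤ t → ((t + τ : ℝ) : EReal) < T →
      (1 / τ) * ∫ s in t..(t + τ), h s ≤ b) :
    ∀ t : ℝ, t₀ ≤ t → (t : EReal) < T →
      y t ≤ y t₀ * Real.exp (-a * (t - t₀)) + b * τ / (1 - Real.exp (-a * τ)) :=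
  odi_comparison_general T t₀ τ a b hτ0 hτT ha y y' h hy'_int hy_ac hh_nonneg hh_int hODI hh_avg
end

section
/- Let a ∈ ℝ and T ∈ (a, ∞], and set τ := min{1, (T − a)/2}. Suppose y : [a, T) → [0, ∞) is absolutely continuous on every compact subinterval of [a, T), and suppose there are constants L₁, L₂, L₃ > 0 and nonnegative continuous functions h, g : [a, T) → [0, ∞) such that ∫_t^{t+τ} y(s) ds ≤ L₁, ∫_t^{t+τ} h(s) ds ≤ L₂ and ∫_t^{t+τ} g(s) ds ≤ L₃ for all t ∈ (a, T − τ), and y'(t) ≤ h(t)·y(t) + g(t) for almost every t ∈ (a, T). Then y(t) ≤ (L₁/τ)·e^{L₂} + L₃·e^{L₂} for all t ∈ (a + τ, T). -/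
open MeasureTheory Real

/-!
Fix `t ∈ (a + τ, T)`. For every `s ∈ [t - τ, t]`, Gronwall's inequality on `[s, t]` gives
`y t ≤ (y s + ∫ₛᵗ g) * exp (∫ₛᵗ h) ≤ (y s + L₃) * exp L₂`, since `h, g ≥ 0` and `[s, t]`
lies in a window of length `τ`. Averaging over `s ∈ [t - τ, t]` and using `∫ y ≤ L₁` on
that window yields `τ * y t ≤ (L₁ + τ * L₃) * exp L₂`.
-/

open Set intervalIntegral

theorem hasDerivAt_integral_of_continuousOn_Icc {E : Type*} [NormedAddCommGroup E]
    [NormedSpace ℝ E] [CompleteSpace E] {f : ℝ → E} {s t r : ℝ}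
    (hf : ContinuousOn f (Icc s t)) (hr : r ∈ Ioo s t) :
    HasDerivAt (fun u => ∫ x in s..u, f x) (f r) r :=
  integral_hasDerivAt_right
    (hf.mono (uIcc_subset_Icc (left_mem_Icc.2 (hr.1.trans hr.2).le)
      (Ioo_subset_Icc_self hr))).intervalIntegrable
    ((hf.mono Ioo_subset_Icc_self).stronglyMeasurableAtFilter isOpen_Ioo r hr)
    (hf.continuousAt (Icc_mem_nhds hr.1 hr.2))

theorem continuousOn_integral_Icc {E : Type*} [NormedAddCommGroup E]
    [NormedSpace ℝ E] [CompleteSpace E] {f : ℝ → E} {s t : ℝ} (hst : s ≤ t)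
    (hf : IntervalIntegrable f volume s t) :
    ContinuousOn (fun u => ∫ x in s..u, f x) (Icc s t) := by
  simpa only [uIcc_of_le hst] using continuousOn_primitive_interval' hf left_mem_uIcc

theorem le_mul_exp_integral_of_le_add_integral {y h g : ℝ → ℝ} {s t : ℝ} (hst : s ≤ t)
    (hy : ContinuousOn y (Icc s t)) (hh : ContinuousOn h (Icc s t))
    (hg : ContinuousOn g (Icc s t))
    (hh₀ : ∀ r ∈ Icc s t, 0 ≤ h r) (hg₀ : ∀ r ∈ Icc s t, 0 ≤ g r)
    (hle : ∀ r ∈ Icc s t, y r ≤ y s + ∫ u in s..r, h u * y u + g u) :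
    y t ≤ (y s + ∫ u in s..t, g u) * exp (∫ u in s..t, h u) := by
  set φ : ℝ → ℝ := fun r => y s + ∫ u in s..r, h u * y u + g u
  set H : ℝ → ℝ := fun r => ∫ u in s..r, h u
  -- `exp (-H)` is the integrating factor; `g` is left unweighted, which only loses since `H ≥ 0`.
  set ψ : ℝ → ℝ := fun r => φ r * exp (-H r) - ∫ u in s..r, g u
  have hF : ContinuousOn (fun u => h u * y u + g u) (Icc s t) := (hh.mul hy).add hg
  have hprim : ∀ f : ℝ → ℝ, ContinuousOn f (Icc s t) →
      ContinuousOn (fun r => ∫ u in s..r, f u) (Icc s t) := fun f hf =>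
    continuousOn_integral_Icc hst (hf.intervalIntegrable_of_Icc hst)
  have hψ_cont : ContinuousOn ψ (Icc s t) :=
    ((continuousOn_const.add (hprim _ hF)).mul (hprim h hh).neg.rexp).sub (hprim g hg)
  have hψ_deriv : ∀ r ∈ Ioo s t, HasDerivAt ψ
      (h r * (y r - φ r) * exp (-H r) + g r * (exp (-H r) - 1)) r := fun r hr =>
    ((((hasDerivAt_integral_of_continuousOn_Icc hF hr).const_add (y s)).mul
      (hasDerivAt_integral_of_continuousOn_Icc hh hr).neg.exp).sub
      (hasDerivAt_integral_of_continuousOn_Icc hg hr)).congr_deriv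
        (by simp only [φ, H, Pi.neg_apply]; ring)
  have hψ_deriv_nonpos : ∀ r ∈ Ioo s t,
      h r * (y r - φ r) * exp (-H r) + g r * (exp (-H r) - 1) ≤ 0 := by
    intro r hr
    have hr' : r ∈ Icc s t := Ioo_subset_Icc_self hr
    have hH : 0 ≤ H r := integral_nonneg hr.1.le fun u hu => hh₀ u ⟨hu.1, hu.2.trans hr'.2⟩
    have hexp : exp (-H r) ≤ 1 := exp_le_one_iff.2 (neg_nonpos.2 hH)
    have hhy := mul_nonpos_of_nonneg_of_nonpos (hh₀ r hr') (sub_nonpos.2 (hle r hr'))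
    nlinarith [mul_nonpos_of_nonpos_of_nonneg hhy (exp_pos (-H r)).le,
      mul_nonpos_of_nonneg_of_nonpos (hg₀ r hr') (sub_nonpos.2 hexp)]
  have hanti : AntitoneOn ψ (Icc s t) := by
    refine antitoneOn_of_hasDerivWithinAt_nonpos (convex_Icc s t) hψ_cont
      (f' := fun r => h r * (y r - φ r) * exp (-H r) + g r * (exp (-H r) - 1)) ?_ ?_ <;>
      rw [interior_Icc]
    · exact fun r hr => (hψ_deriv r hr).hasDerivWithinAt
    · exact hψ_deriv_nonpos
  have hψ : ψ t ≤ y s := by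
    simpa [ψ, φ, H] using hanti (left_mem_Icc.2 hst) (right_mem_Icc.2 hst) hst
  calc y t ≤ φ t := hle t (right_mem_Icc.2 hst)
    _ = φ t * exp (-H t) * exp (H t) := by
      rw [mul_assoc, ← exp_add, neg_add_cancel, exp_zero, mul_one]
    _ ≤ (y s + ∫ u in s..t, g u) * exp (H t) :=
      mul_le_mul_of_nonneg_right (by linarith [hψ]) (exp_pos _).le

theorem eq_add_integral_of_eq_add_integral {y y' : ℝ → ℝ} {a s r : ℝ}
    (hs : IntervalIntegrable y' volume a s) (hr : IntervalIntegrable y' volume a r)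
    (hys : y s = y a + ∫ u in a..s, y' u) (hyr : y r = y a + ∫ u in a..r, y' u) :
    y r = y s + ∫ u in s..r, y' u := by
  rw [hyr, hys, add_assoc, integral_add_adjacent_intervals hs (hs.symm.trans hr)]

/-- Temam's uniform Gronwall lemma on the window `[s₀, t]`. -/
theorem mul_le_mul_exp_of_ae_deriv_le {y y' h g : ℝ → ℝ} {s₀ t A B C : ℝ} (hs₀t : s₀ ≤ t)
    (hy' : IntervalIntegrable y' volume s₀ t)
    (hy : ∀ r ∈ Icc s₀ t, y r = y s₀ + ∫ u in s₀..r, y' u)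
    (hh : ContinuousOn h (Icc s₀ t)) (hg : ContinuousOn g (Icc s₀ t))
    (hy₀ : ∀ r ∈ Icc s₀ t, 0 ≤ y r) (hh₀ : ∀ r ∈ Icc s₀ t, 0 ≤ h r)
    (hg₀ : ∀ r ∈ Icc s₀ t, 0 ≤ g r)
    (hy'_le : ∀ᵐ u ∂volume.restrict (Icc s₀ t), y' u ≤ h u * y u + g u)
    (hyA : ∫ u in s₀..t, y u ≤ A) (hhB : ∫ u in s₀..t, h u ≤ B) (hgC : ∫ u in s₀..t, g u ≤ C) :
    (t - s₀) * y t ≤ (A + (t - s₀) * C) * exp B := by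
  have hy_cont : ContinuousOn y (Icc s₀ t) :=
    (continuousOn_const.add (continuousOn_integral_Icc hs₀t hy')).congr hy
  have hy_int : IntervalIntegrable y volume s₀ t := hy_cont.intervalIntegrable_of_Icc hs₀t
  have hF : ContinuousOn (fun u => h u * y u + g u) (Icc s₀ t) := (hh.mul hy_cont).add hg
  have hstep : ∀ s ∈ Icc s₀ t, ∀ r ∈ Icc s t, y r ≤ y s + ∫ u in s..r, h u * y u + g u := by
    intro s hs r hr
    have hsub : Icc s r ⊆ Icc s₀ t := Icc_subset_Icc hs.1 hr.2
    have hr' : r ∈ Icc s₀ t := hsub (right_mem_Icc.2 hr.1)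
    have hint : ∀ v ∈ Icc s₀ t, IntervalIntegrable y' volume s₀ v := fun v hv =>
      hy'.mono_set (uIcc_subset_uIcc left_mem_uIcc (uIcc_of_le hs₀t ▸ hv))
    have hmono : ∫ u in s..r, y' u ≤ ∫ u in s..r, h u * y u + g u :=
      integral_mono_ae_restrict hr.1 ((hint s hs).symm.trans (hint r hr'))
        ((hF.mono hsub).intervalIntegrable_of_Icc hr.1)
        (ae_restrict_of_ae_restrict_of_subset hsub hy'_le)
    rw [eq_add_integral_of_eq_add_integral (hint s hs) (hint r hr') (hy s hs) (hy r hr')]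
    linarith
  have hpoint : ∀ s ∈ Icc s₀ t, y t ≤ (y s + C) * exp B := by
    intro s hs
    have hsub : Icc s t ⊆ Icc s₀ t := Icc_subset_Icc_left hs.1
    have hint_le : ∀ f : ℝ → ℝ, (∀ r ∈ Icc s₀ t, 0 ≤ f r) → ContinuousOn f (Icc s₀ t) →
        ∫ u in s..t, f u ≤ ∫ u in s₀..t, f u := fun f hf₀ hf =>
      integral_mono_interval hs.1 hs.2 le_rfl
        (ae_restrict_of_forall_mem measurableSet_Ioc fun u hu => hf₀ u (Ioc_subset_Icc_self hu))
        (hf.intervalIntegrable_of_Icc hs₀t)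
    have hg_nonneg : 0 ≤ ∫ u in s..t, g u := integral_nonneg hs.2 fun u hu => hg₀ u (hsub hu)
    calc y t ≤ (y s + ∫ u in s..t, g u) * exp (∫ u in s..t, h u) :=
          le_mul_exp_integral_of_le_add_integral hs.2 (hy_cont.mono hsub) (hh.mono hsub)
            (hg.mono hsub) (fun r hr => hh₀ r (hsub hr)) (fun r hr => hg₀ r (hsub hr))
            (hstep s hs)
      _ ≤ (y s + C) * exp B :=
          mul_le_mul (by linarith [hint_le g hg₀ hg]) (exp_le_exp.2 ((hint_le h hh₀ hh).trans hhB))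
            (exp_pos _).le (by linarith [hy₀ s hs, hint_le g hg₀ hg])
  calc (t - s₀) * y t = ∫ _ in s₀..t, y t := by simp
    _ ≤ ∫ s in s₀..t, (y s + C) * exp B :=
        integral_mono_on hs₀t intervalIntegrable_const
          ((hy_int.add intervalIntegrable_const).mul_const _) hpoint
    _ = ((∫ s in s₀..t, y s) + (t - s₀) * C) * exp B := by
        rw [intervalIntegral.integral_mul_const,
          intervalIntegral.integral_add hy_int intervalIntegrable_const,
          intervalIntegral.integral_const, smul_eq_mul]
    _ ≤ (A + (t - s₀) * C) * exp B := by gcongr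

theorem pos_of_two_mul_eq_min_sub {T : EReal} {a τ : ℝ} (haT : (a : EReal) < T)
    (hτ : ((2 * τ : ℝ) : EReal) = min 2 (T - (a : EReal))) : 0 < τ := by
  have h2τ : ((0 : ℝ) : EReal) < ((2 * τ : ℝ) : EReal) :=
    hτ ▸ lt_min (by norm_num) (EReal.sub_pos.2 haT)
  linarith [EReal.coe_lt_coe_iff.1 h2τ]

/-- `τ = min {1, (T − a)/2}` is encoded as `2τ = min {2, T − a}` in `EReal`, and absolute
continuity of `y` as `y t = y a + ∫_a^t y'` with `y'` integrable on each `[a, t]`. -/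
theorem gronwall_uniform_bound_general
    (T : EReal) (a τ L₁ L₂ L₃ : ℝ)
    (haT : (a : EReal) < T)
    (hτ : ((2 * τ : ℝ) : EReal) = min 2 (T - (a : EReal)))
    (y y' h g : ℝ → ℝ)
    (hy_nonneg : ∀ t : ℝ, a ≤ t → (t : EReal) < T → 0 ≤ y t)
    (hy'_int : ∀ t : ℝ, a ≤ t → (t : EReal) < T → IntervalIntegrable y' volume a t)
    (hy_ac : ∀ t : ℝ, a ≤ t → (t : EReal) < T → y t = y a + ∫ s in a..t, y' s)
    (hh_cont : ContinuousOn h {t : ℝ | a ≤ t ∧ (t : EReal) < T})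
    (hg_cont : ContinuousOn g {t : ℝ | a ≤ t ∧ (t : EReal) < T})
    (hh_nonneg : ∀ t : ℝ, a ≤ t → (t : EReal) < T → 0 ≤ h t)
    (hg_nonneg : ∀ t : ℝ, a ≤ t → (t : EReal) < T → 0 ≤ g t)
    (hy_avg : ∀ t : ℝ, a < t → ((t + τ : ℝ) : EReal) < T → ∫ s in t..(t + τ), y s ≤ L₁)
    (hh_avg : ∀ t : ℝ, a < t → ((t + τ : ℝ) : EReal) < T → ∫ s in t..(t + τ), h s ≤ L₂)
    (hg_avg : ∀ t : ℝ, a < t → ((t + τ : ℝ) : EReal) < T → ∫ s in t..(t + τ), g s ≤ L₃)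
    (hODI : ∀ᵐ t ∂(volume.restrict {t : ℝ | a < t ∧ (t : EReal) < T}),
      y' t ≤ h t * y t + g t) :
    ∀ t : ℝ, a + τ < t → (t : EReal) < T →
      y t ≤ L₁ / τ * Real.exp L₂ + L₃ * Real.exp L₂ := by
  intro t ht htT
  have hτ₀ : 0 < τ := pos_of_two_mul_eq_min_sub haT hτ
  have hs₀ : a < t - τ := by linarith
  have hwin : Icc (t - τ) t ⊆ {r : ℝ | a < r ∧ (r : EReal) < T} := fun r hr =>
    ⟨hs₀.trans_le hr.1, (EReal.coe_le_coe_iff.2 hr.2).trans_lt htT⟩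
  have hdom : ∀ r ∈ Icc (t - τ) t, a ≤ r ∧ (r : EReal) < T := fun r hr =>
    ⟨(hwin hr).1.le, (hwin hr).2⟩
  have hs₀T : ((t - τ : ℝ) : EReal) < T := (hwin (left_mem_Icc.2 (by linarith))).2
  have hwindow : ∀ {f : ℝ → ℝ} {L : ℝ},
      (∀ s, a < s → ((s + τ : ℝ) : EReal) < T → ∫ u in s..(s + τ), f u ≤ L) →
      ∫ u in (t - τ)..t, f u ≤ L := fun hf => by
    simpa only [sub_add_cancel] using hf (t - τ) hs₀ (by rwa [sub_add_cancel])
  have key := mul_le_mul_exp_of_ae_deriv_le (sub_le_self t hτ₀.le)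
    ((hy'_int _ hs₀.le hs₀T).symm.trans (hy'_int t (by linarith) htT))
    (fun r hr => eq_add_integral_of_eq_add_integral (hy'_int _ hs₀.le hs₀T)
      ((hdom r hr).elim (hy'_int r)) (hy_ac _ hs₀.le hs₀T) ((hdom r hr).elim (hy_ac r)))
    (hh_cont.mono fun r hr => hdom r hr) (hg_cont.mono fun r hr => hdom r hr)
    (fun r hr => (hdom r hr).elim (hy_nonneg r))
    (fun r hr => (hdom r hr).elim (hh_nonneg r))
    (fun r hr => (hdom r hr).elim (hg_nonneg r))
    (ae_restrict_of_ae_restrict_of_subset hwin hODI)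
    (hwindow hy_avg) (hwindow hh_avg) (hwindow hg_avg)
  rw [sub_sub_cancel] at key
  have hrhs : L₁ / τ * exp L₂ + L₃ * exp L₂ = (L₁ + τ * L₃) * exp L₂ / τ := by
    field_simp
  rwa [hrhs, le_div_iff₀ hτ₀, mul_comm]

/-- **Lemma (Gronwall-type uniform bound).** Let `a ∈ ℝ`, `T ∈ (a, ∞]`, and
`τ := min {1, (T − a)/2}` (encoded as `2τ = min {2, T − a}` in `EReal`).
Suppose `y : [a, T) → [0, ∞)` is absolutely continuous on compact subintervals
(encoded via `y t = y a + ∫_a^t y'` with `y'` locally integrable), and there are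
constants `L₁, L₂, L₃ > 0` and nonnegative continuous `h, g : [a, T) → [0, ∞)` with
`∫_t^{t+τ} y ≤ L₁`, `∫_t^{t+τ} h ≤ L₂`, `∫_t^{t+τ} g ≤ L₃` for all `t ∈ (a, T − τ)`,
and `y' t ≤ h t * y t + g t` for a.e. `t ∈ (a, T)`. Then
`y t ≤ (L₁/τ) e^{L₂} + L₃ e^{L₂}` for all `t ∈ (a + τ, T)`. -/
theorem gronwall_uniform_bound
    (T : EReal) (a τ L₁ L₂ L₃ : ℝ)
    (haT : (a : EReal) < T)
    (hτ : ((2 * τ : ℝ) : EReal) = min 2 (T - (a : EReal)))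
    (hL₁ : 0 < L₁) (hL₂ : 0 < L₂) (hL₃ : 0 < L₃)
    (y y' h g : ℝ → ℝ)
    (hy_nonneg : ∀ t : ℝ, a ≤ t → (t : EReal) < T → 0 ≤ y t)
    (hy'_int : ∀ t : ℝ, a ≤ t → (t : EReal) < T → IntervalIntegrable y' volume a t)
    (hy_ac : ∀ t : ℝ, a ≤ t → (t : EReal) < T → y t = y a + ∫ s in a..t, y' s)
    (hh_cont : ContinuousOn h {t : ℝ | a ≤ t ∧ (t : EReal) < T})
    (hg_cont : ContinuousOn g {t : ℝ | a ≤ t ∧ (t : EReal) < T})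
    (hh_nonneg : ∀ t : ℝ, a ≤ t → (t : EReal) < T → 0 ≤ h t)
    (hg_nonneg : ∀ t : ℝ, a ≤ t → (t : EReal) < T → 0 ≤ g t)
    (hy_avg : ∀ t : ℝ, a < t → ((t + τ : ℝ) : EReal) < T → ∫ s in t..(t + τ), y s ≤ L₁)
    (hh_avg : ∀ t : ℝ, a < t → ((t + τ : ℝ) : EReal) < T → ∫ s in t..(t + τ), h s ≤ L₂)
    (hg_avg : ∀ t : ℝ, a < t → ((t + τ : ℝ) : EReal) < T → ∫ s in t..(t + τ), g s ≤ L₃)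
    (hODI : ∀ᵐ t ∂(volume.restrict {t : ℝ | a < t ∧ (t : EReal) < T}),
      y' t ≤ h t * y t + g t) :
    ∀ t : ℝ, a + τ < t → (t : EReal) < T →
      y t ≤ L₁ / τ * Real.exp L₂ + L₃ * Real.exp L₂ :=
  gronwall_uniform_bound_general T a τ L₁ L₂ L₃ haT hτ y y' h g hy_nonneg hy'_int hy_ac hh_cont
    hg_cont hh_nonneg hg_nonneg hy_avg hh_avg hg_avg hODI
end
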